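/- Let c be a single column and D a skew diagram which is not a sum of fat staircases. Then neither D ⊙_i c nor c ⊙_i D (the near-concatenations of depth i of D with the column c, whenever defined) is a sum of fat staircases. -/

import Mathlib

open Finset

/-- A diagram is a finite set of cells `(row, column)`. -/
abbrev Diagram := Finset (ℕ × ℕ)

def ht (D : Diagram) : ℕ := D.sup (fun c => c.1 + 1)
def wd (D : Diagram) : ℕ := D.sup (fun c => c.2 + 1)

/-- A semistandard Young tableau of shape `D` (entries are 0-based: the paper's
value `v` corresponds to the entry `v - 1`). -/
structure SSYT (D : Diagram) where
  entry : ℕ × ℕ → ℕ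
  rowWeak : ∀ i j, (i, j) ∈ D → (i, j + 1) ∈ D → entry (i, j) ≤ entry (i, j + 1)
  colStrict : ∀ i j, (i, j) ∈ D → (i + 1, j) ∈ D → entry (i, j) < entry (i + 1, j)
  zero_outside : ∀ c, c ∉ D → entry c = 0

/-- The content of a tableau: `content T v` is the number of cells with entry `v`. -/
noncomputable def content {D : Diagram} (T : SSYT D) : ℕ →₀ ℕ := ∑ c ∈ D, Finsupp.single (T.entry c) 1

/-- `c'` is read before (or equal to) `c` in the reading word:
rows top to bottom, each row right to left. -/
def ReadBefore (c' c : ℕ × ℕ) : Prop := c'.1 < c.1 ∨ (c'.1 = c.1 ∧ c.2 ≤ c'.2)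

instance (c' c : ℕ × ℕ) : Decidable (ReadBefore c' c) := by
  unfold ReadBefore; infer_instance

/-- The reading word of `T` is lattice. -/
def IsLattice {D : Diagram} (T : SSYT D) : Prop :=
  ∀ c ∈ D, ∀ v : ℕ,
    (D.filter (fun c' => ReadBefore c' c ∧ T.entry c' = v + 1)).card ≤
    (D.filter (fun c' => ReadBefore c' c ∧ T.entry c' = v)).card

/-- The skew Schur function of a diagram, as a power series in `x_0, x_1, …`:
the coefficient of the monomial with exponents `d` is the number of SSYT of
shape `D` and content `d`. -/
noncomputable def schurOf (D : Diagram) : MvPowerSeries ℕ ℤ :=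
  fun d => (Nat.card {T : SSYT D // content T = d} : ℤ)

/-- Number of lattice SSYT of shape `D` and content `d`. -/
noncomputable def lrCount (D : Diagram) (d : ℕ →₀ ℕ) : ℕ :=
  Nat.card {T : SSYT D // IsLattice T ∧ content T = d}

/-- Littlewood–Richardson coefficient `c^lam_{mu, d}` (Littlewood–Richardson rule). -/
noncomputable def lrCoeff (lam mu : YoungDiagram) (d : ℕ →₀ ℕ) : ℕ :=
  lrCount (lam.cells \ mu.cells) d

def diagramOfRows (L : List ℕ) : Diagram :=
  (Finset.range L.length).biUnion (fun i => (Finset.range (L.getD i 0)).image (fun j => (i, j)))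

/-- The row lengths of the fat staircase `δ_α`. -/
def staircaseRows (α : List ℕ) : List ℕ :=
  ((List.range α.length).reverse.map (fun i => List.replicate (α.getD i 0) (i + 1))).flatten

/-- The fat staircase `δ_α = (n^{α_n}, …, 1^{α_1})` for `α = (α_1, …, α_n)`. -/
def fatStaircase (α : List ℕ) : Diagram := diagramOfRows (staircaseRows α)

/-- 180 degree rotation of a diagram. -/
def rotD (D : Diagram) : Diagram :=
  D.image (fun c => (ht D - 1 - c.1, wd D - 1 - c.2))

/-- The sequence of row lengths of a diagram, as a finitely supported function. -/
noncomputable def rowContent (D : Diagram) : ℕ →₀ ℕ := ∑ c ∈ D, Finsupp.single c.1 1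

/-- A content (partition) `d` is a fat staircase. -/
def IsFatStaircase (d : ℕ →₀ ℕ) : Prop :=
  ∃ α : List ℕ, (∀ a ∈ α, 0 < a) ∧ d = rowContent (fatStaircase α)

/-- Every Schur function appearing in the expansion of `s_D` is indexed by a fat staircase. -/
def IsSumOfFatStaircases (D : Diagram) : Prop :=
  ∀ d, lrCount D d ≠ 0 → IsFatStaircase d

/-- Near-concatenation of depth `i`. -/
def nearConcat (i : ℕ) (D1 D2 : Diagram) : Diagram :=
  D1.image (fun c => (c.1 + (ht D2 - i), c.2)) ∪ D2.image (fun c => (c.1, c.2 + wd D1))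

/-- Direct sum of diagrams. -/
def directSum (D1 D2 : Diagram) : Diagram := nearConcat 0 D1 D2

/-- A single column of `l` boxes. -/
def colD (l : ℕ) : Diagram := (Finset.range l).image (fun i => (i, 0))

/-- A single row of `m` boxes. -/
def rowD (m : ℕ) : Diagram := (Finset.range m).image (fun j => (0, j))

def colLenAt (D : Diagram) (j : ℕ) : ℕ := (D.filter (fun c => c.2 = j)).card
noncomputable def leftCol (D : Diagram) : ℕ := sInf {j | ∃ i, (i, j) ∈ D}
noncomputable def blCol (D : Diagram) : ℕ := sInf {j | (ht D - 1, j) ∈ D}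
noncomputable def topRow (D : Diagram) : ℕ := sInf {i | ∃ j, (i, j) ∈ D}
noncomputable def tlCol (D : Diagram) : ℕ := sInf {j | (topRow D, j) ∈ D}
def lastRowLen (D : Diagram) : ℕ := (D.filter (fun c => c.1 = ht D - 1)).card

/-- `S(F, E; k)`: the foundation `F` is placed immediately below `E`, with the
first row of `F` beginning one box below and `k` boxes left of the bottom-left
box of `E`. -/
noncomputable def SDiagG (F E : Diagram) (k : ℕ) : Diagram :=
  E.image (fun c => (c.1, c.2 + tlCol F + k)) ∪
  F.image (fun c => (c.1 + ht E, c.2 + blCol E))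

/-- `S(λ, μ, E; k)` with foundation the skew diagram `λ/μ`. -/
noncomputable def SDiag (lam mu : YoungDiagram) (E : Diagram) (k : ℕ) : Diagram :=
  SDiagG (lam.cells \ mu.cells) E k

/-- The set `R_{α,k}` (values as in the paper, i.e. 1-based). -/
def Rset (α : List ℕ) (k : ℕ) : Set ℕ :=
  {v | ∃ j, 1 ≤ j ∧ j ≤ α.length ∧ v = 1 + (α.drop (α.length - j)).sum} ∪
  {v | v = 1 ∧ 0 < k}

def rectD (a b : ℕ) : Diagram := Finset.range a ×ˢ Finset.range b

/-- The complement `D^c` of `D` in the `a × b` rectangle: the 180 degree rotation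
of the set-theoretic complement of `D` in the rectangle. -/
def complD (a b : ℕ) (D : Diagram) : Diagram :=
  (rectD a b \ D).image (fun c => (a - 1 - c.1, b - 1 - c.2))

def IsSkewDiagram (D : Diagram) : Prop :=
  ∃ lam mu : YoungDiagram, mu ≤ lam ∧ D = lam.cells \ mu.cells

def diagramOfF (d : ℕ →₀ ℕ) : Diagram :=
  d.support.biUnion (fun i => (Finset.range (d i)).image (fun j => (i, j)))

/-- A symmetric function is Schur-positive when it is a nonnegative integer
combination of Schur functions of partitions. -/
def SchurPositive (f : MvPowerSeries ℕ ℤ) : Prop :=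
  ∃ (S : Finset (ℕ →₀ ℕ)) (a : (ℕ →₀ ℕ) → ℕ),
    (∀ d ∈ S, ∀ i, d (i + 1) ≤ d i) ∧
    f = ∑ d ∈ S, (a d : ℤ) • schurOf (diagramOfF d)

def AdjCell (c c' : ℕ × ℕ) : Prop :=
  (c.1 = c'.1 ∧ (c.2 + 1 = c'.2 ∨ c'.2 + 1 = c.2)) ∨
  (c.2 = c'.2 ∧ (c.1 + 1 = c'.1 ∨ c'.1 + 1 = c.1))

def ConnectedDiagram (D : Diagram) : Prop :=
  ∀ c ∈ D, ∀ c' ∈ D, Relation.ReflTransGen (fun a b => a ∈ D ∧ b ∈ D ∧ AdjCell a b) c c'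

/-! Take a lattice tableau of `D` whose content `d` is not a fat staircase; being a partition,
`d` has a drop of at least two between consecutive parts. Gluing it to the column tableau
`0, 1, …, l - 1` gives a lattice tableau of either near-concatenation, of content `d + (1^l)`.
The seam is weakly increasing: on one side a lattice entry of a skew shape never exceeds its row
index, on the other the bottom `i` cells of the first column of `D` hold strictly increasing
entries. Adding the antitone `(1^l)` cannot close a drop of two, so the new content is not a fat
staircase either. -/

open OrderDual

lemma sum_single_one_apply {β : Type*} (S : Finset β) (f : β → ℕ) (u : ℕ) :
    (∑ c ∈ S, Finsupp.single (f c) 1) u = (S.filter fun c => f c = u).card := by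
  classical
  simp [Finsupp.finsetSum_apply, Finsupp.single_apply, Finset.sum_boole]

lemma content_apply {D : Diagram} (T : SSYT D) (u : ℕ) :
    content T u = (D.filter fun c => T.entry c = u).card :=
  sum_single_one_apply D T.entry u

lemma lt_ht {D : Diagram} {c : ℕ × ℕ} (h : c ∈ D) : c.1 < ht D :=
  Finset.le_sup (f := fun c => c.1 + 1) h

lemma lt_wd {D : Diagram} {c : ℕ × ℕ} (h : c ∈ D) : c.2 < wd D :=
  Finset.le_sup (f := fun c => c.2 + 1) h

lemma IsSkewDiagram.ordConnected {D : Diagram} (hD : IsSkewDiagram D) :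
    (D : Set (ℕ × ℕ)).OrdConnected := by
  obtain ⟨lam, mu, -, rfl⟩ := hD
  rw [Finset.coe_sdiff, Set.sdiff_eq]
  exact lam.isLowerSet.ordConnected.inter mu.isLowerSet.compl.ordConnected

lemma SSYT.entry_injective {D : Diagram} : Function.Injective (SSYT.entry (D := D)) := by
  rintro ⟨⟩ ⟨⟩ h
  congr

lemma readBefore_iff {c' c : ℕ × ℕ} :
    ReadBefore c' c ↔ toLex (c'.1, toDual c'.2) ≤ toLex (c.1, toDual c.2) := by
  simp [ReadBefore, Prod.Lex.le_iff]

/-- An initial segment of the reading word is the prefix ending at its last cell. -/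
lemma IsLattice.card_filter_le {D : Diagram} {T : SSYT D} (hT : IsLattice T)
    (P : ℕ × ℕ → Prop) [DecidablePred P]
    (hP : ∀ c ∈ D, ∀ c' ∈ D, ReadBefore c c' → P c' → P c) (v : ℕ) :
    (D.filter fun c => P c ∧ T.entry c = v + 1).card ≤
      (D.filter fun c => P c ∧ T.entry c = v).card := by
  rcases (D.filter fun c => P c ∧ T.entry c = v + 1).eq_empty_or_nonempty with h | ⟨c₀, hc₀⟩
  · simp [h]
  have hS : (D.filter P).Nonempty := ⟨c₀, by simp only [Finset.mem_filter] at hc₀ ⊢; tauto⟩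
  obtain ⟨m, hmS, hmax⟩ := (D.filter P).exists_max_image (fun c => toLex (c.1, toDual c.2)) hS
  rw [Finset.mem_filter] at hmS
  have hseg : ∀ c ∈ D, P c ↔ ReadBefore c m := fun c hc =>
    ⟨fun hPc => readBefore_iff.2 (hmax c (Finset.mem_filter.2 ⟨hc, hPc⟩)),
      fun h => hP c hc m hmS.1 h hmS.2⟩
  have hfilter : ∀ u, (D.filter fun c => P c ∧ T.entry c = u) =
      D.filter fun c => ReadBefore c m ∧ T.entry c = u := fun u =>
    Finset.filter_congr fun c hc => by rw [hseg c hc]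
  rw [hfilter, hfilter]
  exact hT m hmS.1 v

lemma IsLattice.antitone_content {D : Diagram} {T : SSYT D} (hT : IsLattice T) :
    Antitone (content T) :=
  antitone_nat_of_succ_le fun v => by
    simpa [content_apply] using hT.card_filter_le (fun _ => True) (by simp) v

lemma SSYT.entry_le_entry_of_row {D : Diagram} (hD : (D : Set (ℕ × ℕ)).OrdConnected)
    (T : SSYT D) {r a b : ℕ} (hab : a ≤ b) (ha : (r, a) ∈ D) (hb : (r, b) ∈ D) :
    T.entry (r, a) ≤ T.entry (r, b) := by
  obtain ⟨p, rfl⟩ := Nat.exists_eq_add_of_le hab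
  induction p with
  | zero => rfl
  | succ p ih =>
    have hmid : (r, a + p) ∈ D :=
      hD.out ha hb ⟨Prod.mk_le_mk.2 ⟨le_rfl, by omega⟩, Prod.mk_le_mk.2 ⟨le_rfl, by omega⟩⟩
    exact (ih (by omega) hmid).trans (T.rowWeak r (a + p) hmid hb)

lemma SSYT.entry_add_le_of_col {D : Diagram} (hD : (D : Set (ℕ × ℕ)).OrdConnected)
    (T : SSYT D) {a b j : ℕ} (hab : a ≤ b) (ha : (a, j) ∈ D) (hb : (b, j) ∈ D) :
    T.entry (a, j) + (b - a) ≤ T.entry (b, j) := by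
  obtain ⟨p, rfl⟩ := Nat.exists_eq_add_of_le hab
  induction p with
  | zero => simp
  | succ p ih =>
    have hmid : (a + p, j) ∈ D :=
      hD.out ha hb ⟨Prod.mk_le_mk.2 ⟨by omega, le_rfl⟩, Prod.mk_le_mk.2 ⟨by omega, le_rfl⟩⟩
    have hstep := T.colStrict (a + p) j hmid hb
    have hih := ih (by omega) hmid
    rw [← add_assoc] at hb ⊢
    omega

/-- A `v + 1` is preceded in the reading word by a `v`; on an order-convex shape that `v`
lies in a higher row, since one further right in the same row would bound the `v + 1` by `v`. -/
lemma IsLattice.entry_le_row {D : Diagram} (hD : (D : Set (ℕ × ℕ)).OrdConnected) {T : SSYT D}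
    (hT : IsLattice T) : ∀ c ∈ D, T.entry c ≤ c.1 := by
  suffices h : ∀ n, ∀ c ∈ D, T.entry c = n → n ≤ c.1 from fun c hc => h _ c hc rfl
  intro n
  induction n with
  | zero => simp
  | succ n ih =>
    intro c hc hcn
    obtain ⟨c', hc'⟩ : (D.filter fun c' => ReadBefore c' c ∧ T.entry c' = n).Nonempty := by
      rw [← Finset.card_pos]
      refine lt_of_lt_of_le (Finset.card_pos.2 ⟨c, ?_⟩) (hT c hc n)
      exact Finset.mem_filter.2 ⟨hc, Or.inr ⟨rfl, le_rfl⟩, hcn⟩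
    obtain ⟨hc'D, hrb, hc'n⟩ := Finset.mem_filter.1 hc'
    obtain ⟨r, j⟩ := c
    obtain ⟨r', j'⟩ := c'
    rcases hrb with hlt | ⟨rfl, hjj'⟩
    · exact (ih _ hc'D hc'n).trans_lt hlt
    · have := T.entry_le_entry_of_row hD hjj' hc hc'D
      simp only at hcn hc'n this
      omega

lemma SSYT.le_entry_of_le_colLenAt {D : Diagram} (hD : (D : Set (ℕ × ℕ)).OrdConnected) (T : SSYT D)
    {i j r : ℕ} (hi : i ≤ colLenAt D j) (h : (r + (ht D - i), j) ∈ D) :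
    r ≤ T.entry (r + (ht D - i), j) := by
  set col := D.filter fun c => c.2 = j
  obtain ⟨top, htop, hmin⟩ := col.exists_min_image Prod.fst ⟨_, Finset.mem_filter.2 ⟨h, rfl⟩⟩
  obtain ⟨htopD, htopj⟩ := Finset.mem_filter.1 htop
  have hcol : col ⊆ Finset.Ico top.1 (ht D) ×ˢ {j} := fun c hc => by
    obtain ⟨hcD, rfl⟩ := Finset.mem_filter.1 hc
    simp [hmin c hc, lt_ht hcD]
  have hlen : i ≤ ht D - top.1 := by
    simpa using hi.trans (Finset.card_le_card hcol)
  have hstart : (ht D - i, j) ∈ D := by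
    have := lt_ht htopD
    refine hD.out htopD h ⟨Prod.mk_le_mk.2 ⟨by omega, htopj.le⟩, Prod.mk_le_mk.2 ⟨by omega, le_rfl⟩⟩
  have := T.entry_add_le_of_col hD (Nat.le_add_left _ r) hstart h
  omega

lemma mem_diagramOfRows {L : List ℕ} {c : ℕ × ℕ} : c ∈ diagramOfRows L ↔ c.2 < L.getD c.1 0 := by
  obtain ⟨r, j⟩ := c
  simp only [diagramOfRows, Finset.mem_biUnion, Finset.mem_range, Finset.mem_image, Prod.mk.injEq]
  constructor
  · rintro ⟨r, -, j, hj, rfl, rfl⟩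
    exact hj
  · intro hj
    refine ⟨r, ?_, j, hj, rfl, rfl⟩
    by_contra hr
    rw [List.getD_eq_default _ _ (by omega)] at hj
    omega

lemma rowContent_diagramOfRows (L : List ℕ) (k : ℕ) :
    rowContent (diagramOfRows L) k = L.getD k 0 := by
  have hrow : (diagramOfRows L).filter (fun c => c.1 = k) = {k} ×ˢ Finset.range (L.getD k 0) := by
    ext ⟨r, j⟩
    simp only [Finset.mem_filter, mem_diagramOfRows, Finset.mem_product, Finset.mem_singleton,
      Finset.mem_range]
    constructor
    · rintro ⟨hj, rfl⟩
      exact ⟨rfl, hj⟩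
    · rintro ⟨rfl, hj⟩
      exact ⟨hj, rfl⟩
  rw [rowContent, sum_single_one_apply, hrow, Finset.card_product, Finset.card_singleton,
    Finset.card_range, one_mul]

lemma staircaseRows_append (β : List ℕ) (a : ℕ) :
    staircaseRows (β ++ [a]) = List.replicate a (β.length + 1) ++ staircaseRows β := by
  unfold staircaseRows
  rw [List.length_append, List.length_singleton, List.range_succ, List.reverse_append]
  simp only [List.reverse_singleton, List.singleton_append, List.map_cons, List.flatten_cons]
  congr 1
  · rw [List.getD_append_right _ _ _ _ le_rfl]
    simp
  · congr 1
    refine List.map_congr_left fun i hi => ?_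
    rw [List.mem_reverse, List.mem_range] at hi
    rw [List.getD_append _ _ _ _ hi]

lemma getD_staircaseRows_append (β : List ℕ) (a k : ℕ) :
    (staircaseRows (β ++ [a])).getD k 0 =
      if k < a then β.length + 1 else (staircaseRows β).getD (k - a) 0 := by
  rw [staircaseRows_append]
  split_ifs with h
  · rw [List.getD_append _ _ _ _ (by simpa using h)]
    simp [h]
  · rw [List.getD_append_right _ _ _ _ (by simpa using h), List.length_replicate]

lemma getD_staircaseRows {α : List ℕ} (hα : ∀ a ∈ α, 0 < a) :
    (staircaseRows α).getD 0 0 = α.length ∧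
      ∀ k, (staircaseRows α).getD (k + 1) 0 ≤ (staircaseRows α).getD k 0 ∧
        (staircaseRows α).getD k 0 ≤ (staircaseRows α).getD (k + 1) 0 + 1 := by
  induction α using List.reverseRecOn with
  | nil => simp [staircaseRows]
  | append_singleton β a ih =>
    obtain ⟨ih0, ihk⟩ := ih fun b hb => hα b (by simp [hb])
    have ha : 0 < a := hα a (by simp)
    simp only [getD_staircaseRows_append, List.length_append, List.length_singleton, if_pos ha,
      true_and]
    intro k
    by_cases h₁ : k + 1 < a
    · rw [if_pos h₁, if_pos (by omega)]
      omega
    by_cases h₂ : k < a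
    · rw [if_neg h₁, if_pos h₂, show k + 1 - a = 0 by omega, ih0]
      omega
    · rw [if_neg h₁, if_neg h₂, show k + 1 - a = k - a + 1 by omega]
      exact ihk (k - a)

lemma exists_staircaseRows_of_antitone {f : ℕ → ℕ} (hanti : Antitone f)
    (hgap : ∀ k, f k ≤ f (k + 1) + 1) (hzero : ∃ N, f N = 0) :
    ∃ β : List ℕ, (∀ b ∈ β, 0 < b) ∧ β.length = f 0 ∧
      ∀ k, f k = (staircaseRows β).getD k 0 := by
  induction hf0 : f 0 generalizing f with
  | zero =>
    refine ⟨[], by simp, rfl, fun k => ?_⟩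
    simpa [staircaseRows, hf0] using hanti (Nat.zero_le k)
  | succ n ih =>
    have hex : ∃ k, f k ≤ n := by
      obtain ⟨N, hN⟩ := hzero
      exact ⟨N, by omega⟩
    -- `a` is the multiplicity of the largest part `n + 1`.
    set a := Nat.find hex
    have htop : ∀ k < a, f k = n + 1 := fun k hk => by
      have := Nat.find_min hex hk
      have := hanti (Nat.zero_le k)
      omega
    have ha : 0 < a := Nat.pos_of_ne_zero fun h => by
      have := Nat.find_spec hex
      rw [show Nat.find hex = 0 from h] at this
      omega
    have hfa : f a = n := by
      have : f a ≤ n := Nat.find_spec hex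
      have := htop (a - 1) (by omega)
      have := hgap (a - 1)
      rw [Nat.sub_add_cancel ha] at this
      omega
    obtain ⟨β, hβ, hβlen, hfβ⟩ := ih (f := fun k => f (k + a))
      (fun k k' hk => hanti (by omega)) (fun k => by simpa [Nat.add_right_comm] using hgap (k + a))
      (by obtain ⟨N, hN⟩ := hzero; exact ⟨N, by have := hanti (Nat.le_add_right N a); omega⟩)
      (by simpa using hfa)
    refine ⟨β ++ [a], ?_, by simp [hβlen], fun k => ?_⟩
    · simp only [List.mem_append, List.mem_singleton]
      rintro b (hb | rfl)
      exacts [hβ b hb, ha]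
    · rw [getD_staircaseRows_append, hβlen]
      split_ifs with hk
      · exact htop k hk
      · simpa [Nat.sub_add_cancel (not_lt.1 hk)] using hfβ (k - a)

lemma isFatStaircase_iff {d : ℕ →₀ ℕ} :
    IsFatStaircase d ↔ Antitone d ∧ ∀ k, d k ≤ d (k + 1) + 1 := by
  constructor
  · rintro ⟨α, hα, rfl⟩
    obtain ⟨-, hk⟩ := getD_staircaseRows hα
    refine ⟨antitone_nat_of_succ_le fun k => ?_, fun k => ?_⟩ <;>
      simp only [fatStaircase, rowContent_diagramOfRows, hk]
  · rintro ⟨hanti, hgap⟩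
    obtain ⟨N, hN⟩ := Infinite.exists_notMem_finset d.support
    obtain ⟨β, hβ, -, hdβ⟩ :=
      exists_staircaseRows_of_antitone hanti hgap ⟨N, Finsupp.notMem_support_iff.1 hN⟩
    exact ⟨β, hβ, Finsupp.ext fun k => by rw [hdβ, fatStaircase, rowContent_diagramOfRows]⟩

lemma not_isFatStaircase_add {d e : ℕ →₀ ℕ} (hd : Antitone d) (hnd : ¬ IsFatStaircase d)
    (he : Antitone e) : ¬ IsFatStaircase (d + e) := by
  obtain ⟨k, hk⟩ : ∃ k, d (k + 1) + 1 < d k := by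
    by_contra! h
    exact hnd (isFatStaircase_iff.2 ⟨hd, h⟩)
  intro hde
  have h1 := (isFatStaircase_iff.1 hde).2 k
  have h2 := he (Nat.le_add_right k 1)
  simp only [Finsupp.add_apply] at h1
  omega

lemma finite_ssyt_content (D : Diagram) (d : ℕ →₀ ℕ) : Finite {T : SSYT D // content T = d} := by
  have hmem : ∀ T : {T : SSYT D // content T = d}, ∀ c : D, T.1.entry c ∈ d.support := by
    rintro ⟨T, rfl⟩ ⟨c, hc⟩
    rw [Finsupp.mem_support_iff, content_apply, ← Nat.pos_iff_ne_zero, Finset.card_pos]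
    exact ⟨c, Finset.mem_filter.2 ⟨hc, rfl⟩⟩
  refine Finite.of_injective (fun T (c : D) => (⟨T.1.entry c, hmem T c⟩ : d.support)) ?_
  intro T T' h
  refine Subtype.ext (SSYT.entry_injective (funext fun c => ?_))
  by_cases hc : c ∈ D
  · exact congrArg Subtype.val (congrFun h ⟨c, hc⟩)
  · rw [T.1.zero_outside c hc, T'.1.zero_outside c hc]

lemma not_isSumOfFatStaircases_iff {D : Diagram} :
    ¬ IsSumOfFatStaircases D ↔ ∃ T : SSYT D, IsLattice T ∧ ¬ IsFatStaircase (content T) := by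
  simp only [IsSumOfFatStaircases, lrCount, not_forall, exists_prop, Nat.card_ne_zero]
  constructor
  · rintro ⟨d, ⟨⟨⟨T, hT, rfl⟩⟩, -⟩, hd⟩
    exact ⟨T, hT, hd⟩
  · rintro ⟨T, hT, hd⟩
    have := finite_ssyt_content D (content T)
    refine ⟨content T, ⟨⟨⟨T, hT, rfl⟩⟩, ?_⟩, hd⟩
    exact Finite.of_injective (fun T' => (⟨T'.1, T'.2.2⟩ : {T' : SSYT D // content T' = content T}))
      fun T₁ T₂ h => Subtype.ext (congrArg Subtype.val h :)

section NearConcat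

variable {i : ℕ} {D₁ D₂ : Diagram}

lemma mem_nearConcat {c : ℕ × ℕ} : c ∈ nearConcat i D₁ D₂ ↔
    (c.2 < wd D₁ ∧ ht D₂ - i ≤ c.1 ∧ (c.1 - (ht D₂ - i), c.2) ∈ D₁) ∨
      (wd D₁ ≤ c.2 ∧ (c.1, c.2 - wd D₁) ∈ D₂) := by
  obtain ⟨r, j⟩ := c
  simp only [nearConcat, Finset.mem_union, Finset.mem_image, Prod.mk.injEq, Prod.exists]
  constructor
  · rintro (⟨a, b, hab, rfl, rfl⟩ | ⟨a, b, hab, rfl, rfl⟩)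
    · exact Or.inl ⟨lt_wd hab, by omega, by simpa using hab⟩
    · exact Or.inr ⟨by omega, by simpa using hab⟩
  · rintro (⟨hj, hr, h⟩ | ⟨hj, h⟩)
    · exact Or.inl ⟨_, _, h, by omega, rfl⟩
    · exact Or.inr ⟨_, _, h, rfl, by omega⟩

def nearConcatFilling (i : ℕ) (D₁ D₂ : Diagram) (f₁ f₂ : ℕ × ℕ → ℕ) (c : ℕ × ℕ) : ℕ :=
  if c.2 < wd D₁ then (if ht D₂ - i ≤ c.1 then f₁ (c.1 - (ht D₂ - i), c.2) else 0)
  else f₂ (c.1, c.2 - wd D₁)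

lemma nearConcatFilling_left {f₁ f₂ : ℕ × ℕ → ℕ} {c : ℕ × ℕ} (hc : c ∈ D₁) :
    nearConcatFilling i D₁ D₂ f₁ f₂ (c.1 + (ht D₂ - i), c.2) = f₁ c := by
  simp [nearConcatFilling, lt_wd hc]

lemma nearConcatFilling_right {f₁ f₂ : ℕ × ℕ → ℕ} (c : ℕ × ℕ) :
    nearConcatFilling i D₁ D₂ f₁ f₂ (c.1, c.2 + wd D₁) = f₂ c := by
  simp [nearConcatFilling]

lemma card_filter_nearConcat (f₁ f₂ : ℕ × ℕ → ℕ) (p : ℕ × ℕ → ℕ → Prop)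
    [∀ c n, Decidable (p c n)] :
    ((nearConcat i D₁ D₂).filter fun c => p c (nearConcatFilling i D₁ D₂ f₁ f₂ c)).card =
      (D₁.filter fun c => p (c.1 + (ht D₂ - i), c.2) (f₁ c)).card +
        (D₂.filter fun c => p (c.1, c.2 + wd D₁) (f₂ c)).card := by
  have hdisj : Disjoint (D₁.image fun c => (c.1 + (ht D₂ - i), c.2))
      (D₂.image fun c => (c.1, c.2 + wd D₁)) := by
    simp only [Finset.disjoint_left, Finset.mem_image, not_exists, not_and]
    rintro _ ⟨a, ha, rfl⟩ b - hb
    have := lt_wd ha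
    simp only [Prod.ext_iff] at hb
    omega
  have hinj₁ : Function.Injective fun c : ℕ × ℕ => (c.1 + (ht D₂ - i), c.2) := fun a b h => by
    simp only [Prod.ext_iff] at h ⊢
    omega
  have hinj₂ : Function.Injective fun c : ℕ × ℕ => (c.1, c.2 + wd D₁) := fun a b h => by
    simp only [Prod.ext_iff] at h ⊢
    omega
  rw [nearConcat, Finset.filter_union,
    Finset.card_union_of_disjoint (Finset.disjoint_filter_filter hdisj), Finset.filter_image,
    Finset.filter_image, Finset.card_image_of_injective _ hinj₁,
    Finset.card_image_of_injective _ hinj₂]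
  congr 2
  · exact Finset.filter_congr fun c hc => by simp only [nearConcatFilling_left hc]
  · exact Finset.filter_congr fun c _ => by simp only [nearConcatFilling_right]

/-- No column meets both pieces, so only the rows crossing the seam need a condition. -/
def nearConcatTableau (i : ℕ) (T₁ : SSYT D₁) (T₂ : SSYT D₂)
    (hseam : ∀ r, (r, wd D₁ - 1) ∈ D₁ → (r + (ht D₂ - i), 0) ∈ D₂ →
      T₁.entry (r, wd D₁ - 1) ≤ T₂.entry (r + (ht D₂ - i), 0)) :
    SSYT (nearConcat i D₁ D₂) where
  entry := nearConcatFilling i D₁ D₂ T₁.entry T₂.entry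
  rowWeak r j h h' := by
    rw [mem_nearConcat] at h h'
    simp only [nearConcatFilling] at h h' ⊢
    rcases h with ⟨hj, hr, h⟩ | ⟨hj, h⟩ <;> rcases h' with ⟨hj', -, h'⟩ | ⟨hj', h'⟩
    · rw [if_pos hj, if_pos hr, if_pos hj', if_pos hr]
      exact T₁.rowWeak _ _ h h'
    · obtain rfl : j = wd D₁ - 1 := by omega
      rw [if_pos hj, if_pos hr, if_neg (by omega)]
      rw [show wd D₁ - 1 + 1 - wd D₁ = 0 by omega] at h' ⊢
      simpa [Nat.sub_add_cancel hr] using hseam _ h (by rwa [Nat.sub_add_cancel hr])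
    · omega
    · rw [if_neg (by omega), if_neg (by omega)]
      rw [show j + 1 - wd D₁ = j - wd D₁ + 1 by omega] at h' ⊢
      exact T₂.rowWeak _ _ h h'
  colStrict r j h h' := by
    rw [mem_nearConcat] at h h'
    simp only [nearConcatFilling] at h h' ⊢
    rcases h with ⟨hj, hr, h⟩ | ⟨hj, h⟩ <;> rcases h' with ⟨hj', -, h'⟩ | ⟨hj', h'⟩
    · rw [if_pos hj, if_pos hr, if_pos hj, if_pos (by omega)]
      rw [show r + 1 - (ht D₂ - i) = r - (ht D₂ - i) + 1 by omega] at h' ⊢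
      exact T₁.colStrict _ _ h h'
    · omega
    · omega
    · rw [if_neg (by omega), if_neg (by omega)]
      exact T₂.colStrict _ _ h h'
  zero_outside c hc := by
    rw [mem_nearConcat] at hc
    simp only [nearConcatFilling]
    split_ifs with hj hr
    · exact T₁.zero_outside _ fun h => hc (Or.inl ⟨hj, hr, h⟩)
    · rfl
    · exact T₂.zero_outside _ fun h => hc (Or.inr ⟨by omega, h⟩)

variable {T₁ : SSYT D₁} {T₂ : SSYT D₂}
  {hseam : ∀ r, (r, wd D₁ - 1) ∈ D₁ → (r + (ht D₂ - i), 0) ∈ D₂ →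
      T₁.entry (r, wd D₁ - 1) ≤ T₂.entry (r + (ht D₂ - i), 0)}

lemma content_nearConcatTableau :
    content (nearConcatTableau i T₁ T₂ hseam) = content T₁ + content T₂ := by
  ext u
  simp only [Finsupp.add_apply, content_apply]
  exact card_filter_nearConcat T₁.entry T₂.entry fun _ n => n = u

/-- Both copies are read in their original relative order, so each contributes a lattice
count on every prefix of the reading word. -/
lemma isLattice_nearConcatTableau (h₁ : IsLattice T₁) (h₂ : IsLattice T₂) :
    IsLattice (nearConcatTableau i T₁ T₂ hseam) := by
  intro c _ v
  have hcount := fun u =>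
    card_filter_nearConcat (i := i) (D₁ := D₁) (D₂ := D₂) T₁.entry T₂.entry
      fun c' n => ReadBefore c' c ∧ n = u
  refine (hcount (v + 1)).trans_le ((Nat.add_le_add ?_ ?_).trans_eq (hcount v).symm)
  · refine h₁.card_filter_le _ (fun a _ b _ hab hb => ?_) v
    simp only [ReadBefore] at hab hb ⊢
    omega
  · refine h₂.card_filter_le _ (fun a _ b _ hab hb => ?_) v
    simp only [ReadBefore] at hab hb ⊢
    omega

end NearConcat

lemma mem_colD {l : ℕ} {c : ℕ × ℕ} : c ∈ colD l ↔ c.1 < l ∧ c.2 = 0 := by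
  obtain ⟨r, j⟩ := c
  simp [colD, eq_comm]

def colTableau (l : ℕ) : SSYT (colD l) where
  entry c := if c ∈ colD l then c.1 else 0
  rowWeak r j h h' := by
    rw [mem_colD] at h h'
    omega
  colStrict r j h h' := by simp [h, h']
  zero_outside _ hc := if_neg hc

lemma colTableau_entry {l : ℕ} {c : ℕ × ℕ} (hc : c ∈ colD l) : (colTableau l).entry c = c.1 :=
  if_pos hc

/-- Moving one row up sends the `v + 1`s of a prefix of the reading word to `v`s. -/
lemma isLattice_colTableau (l : ℕ) : IsLattice (colTableau l) := by
  intro c _ v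
  refine Finset.card_le_card_of_injOn (fun c' => (c'.1 - 1, c'.2)) (fun c' hc' => ?_) ?_
  · simp only [Finset.mem_coe, Finset.mem_filter] at hc' ⊢
    obtain ⟨hcol, hrb, hv⟩ := hc'
    rw [colTableau_entry hcol] at hv
    have hmem : (c'.1 - 1, c'.2) ∈ colD l := by
      rw [mem_colD] at hcol ⊢
      omega
    refine ⟨hmem, ?_, by rw [colTableau_entry hmem]; omega⟩
    simp only [ReadBefore] at hrb ⊢
    omega
  · intro a ha b hb hab
    simp only [Finset.mem_coe, Finset.mem_filter] at ha hb
    rw [colTableau_entry ha.1] at ha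
    rw [colTableau_entry hb.1] at hb
    simp only [Prod.ext_iff] at hab ⊢
    omega

theorem nearConcat_col_not_sumOfFatStaircases_general (D : Diagram) (hD : IsSkewDiagram D)
    (hnot : ¬ IsSumOfFatStaircases D) (i l : ℕ)
    (hfirst : i ≤ colLenAt D (leftCol D)) :
    ¬ IsSumOfFatStaircases (nearConcat i D (colD l)) ∧
    ¬ IsSumOfFatStaircases (nearConcat i (colD l) D) := by
  obtain ⟨T, hT, hnfs⟩ := not_isSumOfFatStaircases_iff.1 hnot
  have hcol := not_isFatStaircase_add hT.antitone_content hnfs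
    (isLattice_colTableau l).antitone_content
  constructor
  · refine not_isSumOfFatStaircases_iff.2 ⟨nearConcatTableau i T (colTableau l) fun r hr hc => ?_,
      isLattice_nearConcatTableau hT (isLattice_colTableau l), by rwa [content_nearConcatTableau]⟩
    rw [colTableau_entry hc]
    exact (hT.entry_le_row hD.ordConnected _ hr).trans (Nat.le_add_right _ _)
  · refine not_isSumOfFatStaircases_iff.2 ⟨nearConcatTableau i (colTableau l) T fun r hr hc => ?_,
      isLattice_nearConcatTableau (isLattice_colTableau l) hT, by
        rwa [content_nearConcatTableau, add_comm]⟩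
    have hleft : leftCol D = 0 := Nat.sInf_eq_zero.2 (Or.inl ⟨_, hc⟩)
    rw [colTableau_entry hr]
    exact T.le_entry_of_le_colLenAt hD.ordConnected (hleft ▸ hfirst) hc

/-- adding one column (on either side, at any valid depth) to a
skew diagram that is not a sum of fat staircases never produces a sum of fat
staircases. -/
theorem nearConcat_col_not_sumOfFatStaircases (D : Diagram) (hD : IsSkewDiagram D)
    (hnot : ¬ IsSumOfFatStaircases D) (i l : ℕ)
    (hil : i ≤ l) (hfirst : i ≤ colLenAt D (leftCol D))
    (hlast : i ≤ colLenAt D (wd D - 1)) :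
    ¬ IsSumOfFatStaircases (nearConcat i D (colD l)) ∧
    ¬ IsSumOfFatStaircases (nearConcat i (colD l) D) :=
  nearConcat_col_not_sumOfFatStaircases_general D hD hnot i l hfirst
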